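/- Let n ≥ 1. For every L ∈ ℕ, L ≥ 1, one has the exact identity Π_{nL,c}( 2^{n−1}/(2^n+1) ) = 2^{−nL}·( cot(π/(2(2^n+1))) )^L. -/

import Mathlib

open Real MeasureTheory Filter

noncomputable section

/-- The perturbing sequence: `c j = 1` if `n ∣ j`, else `0`. -/
def pert (n j : ℕ) : ℕ := if n ∣ j then 1 else 0

/-- The lacunary trigonometric product `Π_{r,γ}(α) = ∏_{j<r} |cos(2^j α π + γ_j π/2)|`. -/
def PiProd (r : ℕ) (γ : ℕ → ℕ) (α : ℝ) : ℝ :=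
  ∏ j ∈ Finset.range r, |Real.cos (2 ^ j * α * π + γ j * π / 2)|

/-!
If `(2^n + 1) α` is an integer then `2^n α ≡ -α (mod 1)`, so the factors of `Π_{r,γ}(α)` repeat
with period `n` whenever `γ` does: the sign change is invisible to `|cos|`, since flipping the
sign of `γ_j π/2` only shifts the argument by a multiple of `π`. Hence `Π_{nL,c}(α) = Π_{n,c}(α)^L`.
In the first block only `c_0 = 1`, so it equals `|sin απ| ∏_{1≤s<n} |cos 2^s απ|`, and the
doubling formula telescopes the product to `|sin 2^n απ| / (2^{n-1} |sin 2απ|)`. Again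
`|sin 2^n απ| = |sin απ|`, so the block is `2^{-n} |tan απ|`, and `α = 2^{n-1}/(2^n+1)` gives
`απ = π/2 - π/(2(2^n+1))`.
-/

theorem Function.Periodic.prod_range_mul_eq_pow {M : Type*} [CommMonoid M] {f : ℕ → M} {n : ℕ}
    (hf : Function.Periodic f n) (L : ℕ) :
    ∏ j ∈ Finset.range (n * L), f j = (∏ j ∈ Finset.range n, f j) ^ L := by
  induction L with
  | zero => simp
  | succ L ih =>
    rw [Nat.mul_succ, Finset.prod_range_add, ih, pow_succ]
    congr 1
    refine Finset.prod_congr rfl fun s _ => ?_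
    rw [add_comm, mul_comm]
    exact hf.nat_mul L s

lemma pert_periodic (n : ℕ) : Function.Periodic (pert n) n := fun j => by
  simp only [pert, Nat.dvd_add_self_right]

lemma abs_cos_int_mul_pi_sub (x : ℝ) (k : ℤ) : |cos (k * π - x)| = |cos x| := by
  rw [cos_int_mul_pi_sub, abs_mul, abs_neg_one_zpow, one_mul]

lemma abs_sin_int_mul_pi_sub (x : ℝ) (k : ℤ) : |sin (k * π - x)| = |sin x| := by
  rw [sin_int_mul_pi_sub, abs_neg, abs_mul, abs_neg_one_zpow, one_mul]

lemma abs_sin_two_pow_mul (y : ℝ) (m : ℕ) :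
    |sin (2 ^ m * y)| = 2 ^ m * |sin y| * ∏ s ∈ Finset.range m, |cos (2 ^ s * y)| := by
  induction m with
  | zero => simp
  | succ m ih =>
    rw [Finset.prod_range_succ, pow_succ', mul_assoc, sin_two_mul, abs_mul, abs_mul, abs_two, ih]
    ring

lemma PiProd_mul_eq_pow {n : ℕ} {γ : ℕ → ℕ} {α : ℝ} {k : ℤ} (hγ : Function.Periodic γ n)
    (hα : ((2 : ℝ) ^ n + 1) * α = k) (L : ℕ) :
    PiProd (n * L) γ α = PiProd n γ α ^ L := by
  refine Function.Periodic.prod_range_mul_eq_pow (fun j => ?_) L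
  have hshift : 2 ^ (j + n) * α * π + γ (j + n) * π / 2
      = ((2 ^ j * k + γ j : ℤ) : ℝ) * π - (2 ^ j * α * π + γ j * π / 2) := by
    rw [hγ j, pow_add]
    push_cast
    linear_combination (2 ^ j * π) * hα
  rw [hshift, abs_cos_int_mul_pi_sub]

lemma PiProd_pert_eq_abs_tan {n : ℕ} (hn : 1 ≤ n) {α : ℝ} {k : ℤ} (hα : ((2 : ℝ) ^ n + 1) * α = k)
    (hcos : cos (α * π) ≠ 0) :
    PiProd n (pert n) α = (2 ^ n)⁻¹ * |tan (α * π)| := by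
  obtain ⟨m, rfl⟩ : ∃ m, n = m + 1 := ⟨n - 1, by omega⟩
  set Q := ∏ s ∈ Finset.range m, |cos (2 ^ s * (2 * α * π))|
  have hsplit : PiProd (m + 1) (pert (m + 1)) α = Q * |sin (α * π)| := by
    rw [PiProd, Finset.prod_range_succ']
    congr 1
    · refine Finset.prod_congr rfl fun s hs => ?_
      have hndvd : ¬ m + 1 ∣ s + 1 :=
        Nat.not_dvd_of_pos_of_lt s.succ_pos (by simpa using Finset.mem_range.mp hs)
      simp only [pert, hndvd, if_false, Nat.cast_zero, zero_mul, zero_div, add_zero]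
      ring_nf
    · simp [pert, cos_add_pi_div_two]
  have htop : |sin (2 ^ m * (2 * α * π))| = |sin (α * π)| := by
    rw [show 2 ^ m * (2 * α * π) = k * π - α * π by rw [← hα]; ring, abs_sin_int_mul_pi_sub]
  have htel := abs_sin_two_pow_mul (2 * α * π) m
  rw [htop, show sin (2 * α * π) = 2 * sin (α * π) * cos (α * π) by rw [← sin_two_mul]; ring_nf,
    abs_mul, abs_mul, abs_two] at htel
  rw [hsplit, tan_eq_sin_div_cos, abs_div]
  have hcos' : 0 < |cos (α * π)| := abs_pos.mpr hcos
  field_simp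
  linear_combination -htel

lemma PiProd_mul_pert_eq_abs_tan_pow {n : ℕ} (hn : 1 ≤ n) {α : ℝ} {k : ℤ} (hα : ((2 : ℝ) ^ n + 1) * α = k)
    (hcos : cos (α * π) ≠ 0) (L : ℕ) :
    PiProd (n * L) (pert n) α = ((2 ^ n)⁻¹ * |tan (α * π)|) ^ L := by
  rw [PiProd_mul_eq_pow (pert_periodic n) hα, PiProd_pert_eq_abs_tan hn hα hcos]

theorem PiProd_eq_cot_pow_general (n : ℕ) (hn : 1 ≤ n) (L : ℕ) :
    PiProd (n * L) (pert n) ((2:ℝ) ^ (n - 1) / (2 ^ n + 1)) =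
      ((2:ℝ) ^ (n * L))⁻¹ * Real.cot (π / (2 * (2 ^ n + 1))) ^ L := by
  set t := π / (2 * (2 ^ n + 1))
  have ht : 0 < t ∧ t < π / 2 := by
    constructor
    · positivity
    · have : (0 : ℝ) < 2 ^ n := by positivity
      exact div_lt_div_of_pos_left pi_pos two_pos (by linarith)
  have hα : ((2 : ℝ) ^ n + 1) * (2 ^ (n - 1) / (2 ^ n + 1)) = ((2 ^ (n - 1) : ℕ) : ℤ) := by
    push_cast
    field_simp
  have hαπ : 2 ^ (n - 1) / (2 ^ n + 1) * π = π / 2 - t := by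
    obtain ⟨m, rfl⟩ : ∃ m, n = m + 1 := ⟨n - 1, by omega⟩
    simp only [t, Nat.add_sub_cancel]
    field_simp
    ring
  have hsin : 0 < sin t := sin_pos_of_pos_of_lt_pi ht.1 (by linarith)
  rw [PiProd_mul_pert_eq_abs_tan_pow hn hα (by rw [hαπ, cos_pi_div_two_sub]; exact hsin.ne') L, hαπ,
    tan_pi_div_two_sub, abs_inv, abs_of_pos (tan_pos_of_pos_of_lt_pi_div_two ht.1 ht.2),
    cot_eq_cos_div_sin, tan_eq_sin_div_cos, inv_div, mul_pow, inv_pow, pow_mul]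

/-- Theorem 3.1, second part: the exact identity
`Π_{nL,c}(2^{n-1}/(2^n+1)) = 2^{-nL}·(cot(π/(2(2^n+1))))^L`. -/
theorem PiProd_eq_cot_pow (n : ℕ) (hn : 1 ≤ n) (L : ℕ) (hL : 1 ≤ L) :
    PiProd (n * L) (pert n) ((2:ℝ) ^ (n - 1) / (2 ^ n + 1)) =
      ((2:ℝ) ^ (n * L))⁻¹ * Real.cot (π / (2 * (2 ^ n + 1))) ^ L :=
  PiProd_eq_cot_pow_general n hn L
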